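/- Let r > 0, let k, m be natural numbers with m ≥ 1, and for θ ∈ ℝ, x ∈ S^k ⊂ ℝ^{k+1}, y ∈ S^m ⊂ ℝ^{m+1} define ι(θ, x, y) = ((−r·sinθ·x, r·cosθ·y), (cosθ·x, sinθ·y)) ∈ ℝ^{k+m+2} × ℝ^{k+m+2}. Then: (i) writing ι(θ,x,y) = (p, q), we have ‖q‖ = 1, ⟨p, q⟩ = 0, and ‖p‖ = r; (ii) for θ, φ ∈ ℝ, x, u ∈ S^k, y, v ∈ S^m, one has ι(θ, x, y) = ι(φ, u, v) if and only if (cosφ, sinφ, u, v) = (cosθ, sinθ, x, y) or (cosφ, sinφ, u, v) = (−cosθ, −sinθ, −x, −y). -/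

import Mathlib

open scoped RealInnerProductSpace

/-!
For unit `x`, `y`, the vectors `q = (cos θ x, sin θ y)` and `p = r (-sin θ x, cos θ y)` are
orthogonal of lengths `1` and `r`. After cancelling `r`, `ι(θ, x, y) = ι(φ, u, v)` says
`c • (x, y) = c' • (u, v)` for `(c, c') = (cos θ, cos φ)` and `(sin θ, sin φ)`. Comparing norms,
such an equation with `c ≠ 0` forces `(u, v) = ±(x, y)`, and then `c' = ±c` in both equations,
with that sign; and one of `cos θ`, `sin θ` is nonzero.
-/

/-- The two-to-one parametrization `ι` of the generalized Polterovich submanifold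
`𝒫_{k,m}^r ⊂ T*S^{k+m+1}`: `ι(θ, x, y) = ((−r sinθ·x, r cosθ·y), (cosθ·x, sinθ·y))`,
where `ℝ^{k+m+2} = ℝ^{k+1} × ℝ^{m+1}` is modelled as the Euclidean space indexed by
`Fin (k+1) ⊕ Fin (m+1)`. -/
noncomputable def iota (k m : ℕ) (r θ : ℝ)
    (x : EuclideanSpace ℝ (Fin (k + 1))) (y : EuclideanSpace ℝ (Fin (m + 1))) :
    EuclideanSpace ℝ (Fin (k + 1) ⊕ Fin (m + 1)) ×
      EuclideanSpace ℝ (Fin (k + 1) ⊕ Fin (m + 1)) :=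
  (WithLp.toLp 2 (Sum.elim (fun a => -r * Real.sin θ * x a) (fun b => r * Real.cos θ * y b)),
   WithLp.toLp 2 (Sum.elim (fun a => Real.cos θ * x a) (fun b => Real.sin θ * y b)))

section Direction

variable {E : Type*} [NormedAddCommGroup E] [NormedSpace ℝ E]

lemma eq_or_eq_neg_of_smul_eq_smul {x u : E} (hx : x ≠ 0) (hxu : ‖x‖ = ‖u‖) {c c' : ℝ}
    (hc : c ≠ 0) (h : c • x = c' • u) : u = x ∨ u = -x := by
  have habs : |c| = |c'| := by
    have := congrArg norm h
    rwa [norm_smul, norm_smul, Real.norm_eq_abs, Real.norm_eq_abs, hxu,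
      mul_left_inj' (hxu ▸ norm_ne_zero_iff.mpr hx)] at this
  rcases abs_eq_abs.mp habs with rfl | rfl
  · exact Or.inl ((smul_right_inj hc).mp h).symm
  · rw [neg_smul, ← smul_neg, smul_right_inj (neg_ne_zero.mp hc)] at h
    exact Or.inr h.symm

lemma coeffs_eq_or_neg_of_smul_eq_smul {x u : E} (hx : x ≠ 0) (hxu : ‖x‖ = ‖u‖)
    {c s c' s' : ℝ} (hcs : c ≠ 0 ∨ s ≠ 0) (hc : c • x = c' • u) (hs : s • x = s' • u) :
    (c' = c ∧ s' = s ∧ u = x) ∨ (c' = -c ∧ s' = -s ∧ u = -x) := by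
  have hdir : u = x ∨ u = -x := hcs.elim
    (fun hc0 => eq_or_eq_neg_of_smul_eq_smul hx hxu hc0 hc)
    (fun hs0 => eq_or_eq_neg_of_smul_eq_smul hx hxu hs0 hs)
  rcases hdir with rfl | rfl
  · exact Or.inl ⟨(smul_left_injective ℝ hx hc).symm, (smul_left_injective ℝ hx hs).symm, rfl⟩
  · rw [smul_neg, ← neg_smul] at hc hs
    exact Or.inr ⟨by linarith [smul_left_injective ℝ hx hc],
      by linarith [smul_left_injective ℝ hx hs], rfl⟩

end Direction

lemma Real.cos_ne_zero_or_sin_ne_zero (θ : ℝ) : Real.cos θ ≠ 0 ∨ Real.sin θ ≠ 0 := by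
  by_contra! h
  simpa [h.1, h.2] using Real.sin_sq_add_cos_sq θ

section EuclideanSum

variable {ι κ : Type*}

noncomputable def euclideanSum (x : EuclideanSpace ℝ ι) (y : EuclideanSpace ℝ κ) :
    EuclideanSpace ℝ (ι ⊕ κ) :=
  WithLp.toLp 2 (Sum.elim x y)

lemma euclideanSum_inj {x x' : EuclideanSpace ℝ ι} {y y' : EuclideanSpace ℝ κ} :
    euclideanSum x y = euclideanSum x' y' ↔ x = x' ∧ y = y' := by
  simp [euclideanSum, PiLp.ext_iff, funext_iff]

variable [Fintype ι] [Fintype κ]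

lemma inner_euclideanSum (x x' : EuclideanSpace ℝ ι) (y y' : EuclideanSpace ℝ κ) :
    ⟪euclideanSum x y, euclideanSum x' y'⟫ = ⟪x, x'⟫ + ⟪y, y'⟫ := by
  simp [euclideanSum, PiLp.inner_apply, Fintype.sum_sum_type]

lemma inner_euclideanSum_smul_of_norm_eq_one {x : EuclideanSpace ℝ ι} {y : EuclideanSpace ℝ κ}
    (hx : ‖x‖ = 1) (hy : ‖y‖ = 1) (a b c d : ℝ) :
    ⟪euclideanSum (a • x) (b • y), euclideanSum (c • x) (d • y)⟫ = a * c + b * d := by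
  simp only [inner_euclideanSum, inner_smul_left, inner_smul_right, real_inner_self_eq_norm_sq,
    hx, hy, conj_trivial]
  ring

lemma norm_euclideanSum_smul_of_norm_eq_one {x : EuclideanSpace ℝ ι} {y : EuclideanSpace ℝ κ}
    (hx : ‖x‖ = 1) (hy : ‖y‖ = 1) (a b : ℝ) :
    ‖euclideanSum (a • x) (b • y)‖ = √(a ^ 2 + b ^ 2) := by
  rw [norm_eq_sqrt_real_inner, inner_euclideanSum_smul_of_norm_eq_one hx hy, sq, sq]

end EuclideanSum

section Iota

variable {k m : ℕ} {r : ℝ}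

lemma iota_eq (θ : ℝ) (x : EuclideanSpace ℝ (Fin (k + 1))) (y : EuclideanSpace ℝ (Fin (m + 1))) :
    iota k m r θ x y =
      (euclideanSum ((-r * Real.sin θ) • x) ((r * Real.cos θ) • y),
        euclideanSum (Real.cos θ • x) (Real.sin θ • y)) :=
  rfl

lemma iota_eq_iota_iff (hr : r ≠ 0) {θ φ : ℝ} {x u : EuclideanSpace ℝ (Fin (k + 1))}
    {y v : EuclideanSpace ℝ (Fin (m + 1))} :
    iota k m r θ x y = iota k m r φ u v ↔
      Real.cos θ • (x, y) = Real.cos φ • (u, v) ∧ Real.sin θ • (x, y) = Real.sin φ • (u, v) := by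
  simp only [iota_eq, Prod.mk.injEq, euclideanSum_inj, Prod.smul_mk, mul_smul,
    smul_right_inj hr, smul_right_inj (neg_ne_zero.mpr hr)]
  tauto

end Iota

theorem iota_properties_general (r : ℝ) (hr : 0 < r) (k m : ℕ) :
    (∀ (θ : ℝ) (x : EuclideanSpace ℝ (Fin (k + 1))) (y : EuclideanSpace ℝ (Fin (m + 1))),
      ‖x‖ = 1 → ‖y‖ = 1 →
        ‖(iota k m r θ x y).2‖ = 1 ∧
        ⟪(iota k m r θ x y).1, (iota k m r θ x y).2⟫ = 0 ∧
        ‖(iota k m r θ x y).1‖ = r) ∧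
    (∀ (θ φ : ℝ) (x u : EuclideanSpace ℝ (Fin (k + 1)))
        (y v : EuclideanSpace ℝ (Fin (m + 1))),
      ‖x‖ = 1 → ‖y‖ = 1 → ‖u‖ = 1 → ‖v‖ = 1 →
        (iota k m r θ x y = iota k m r φ u v ↔
          (Real.cos φ = Real.cos θ ∧ Real.sin φ = Real.sin θ ∧ u = x ∧ v = y) ∨
          (Real.cos φ = -Real.cos θ ∧ Real.sin φ = -Real.sin θ ∧ u = -x ∧ v = -y))) := by
  refine ⟨fun θ x y hx hy => ⟨?_, ?_, ?_⟩, fun θ φ x u y v hx hy hu hv => ?_⟩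
  · simp [iota_eq, norm_euclideanSum_smul_of_norm_eq_one hx hy]
  · rw [iota_eq, inner_euclideanSum_smul_of_norm_eq_one hx hy]
    ring
  · rw [iota_eq, norm_euclideanSum_smul_of_norm_eq_one hx hy, mul_pow, mul_pow, neg_sq,
      ← mul_add, Real.sin_sq_add_cos_sq, mul_one, Real.sqrt_sq hr.le]
  have hxy : ((x, y) : _ × _) ≠ 0 := fun h => by simp_all
  have hnorm : ‖((x, y) : _ × _)‖ = ‖((u, v) : _ × _)‖ := by simp [hx, hy, hu, hv]
  rw [iota_eq_iota_iff hr.ne']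
  constructor
  · rintro ⟨hc, hs⟩
    simpa [Prod.ext_iff] using
      coeffs_eq_or_neg_of_smul_eq_smul hxy hnorm (Real.cos_ne_zero_or_sin_ne_zero θ) hc hs
  · rintro (⟨hc, hs, rfl, rfl⟩ | ⟨hc, hs, rfl, rfl⟩) <;> simp [hc, hs]

/-- Defining properties of the generalized Polterovich submanifolds: writing
`ι(θ,x,y) = (p,q)` one has `‖q‖ = 1`, `⟨p, q⟩ = 0`, `‖p‖ = r`; and
`ι(θ, x, y) = ι(φ, u, v)` iff `(cos φ, sin φ, u, v)` equals `(cos θ, sin θ, x, y)` or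
`(−cos θ, −sin θ, −x, −y)`. -/
theorem iota_properties (r : ℝ) (hr : 0 < r) (k m : ℕ) (hm : 1 ≤ m) :
    (∀ (θ : ℝ) (x : EuclideanSpace ℝ (Fin (k + 1))) (y : EuclideanSpace ℝ (Fin (m + 1))),
      ‖x‖ = 1 → ‖y‖ = 1 →
        ‖(iota k m r θ x y).2‖ = 1 ∧
        ⟪(iota k m r θ x y).1, (iota k m r θ x y).2⟫ = 0 ∧
        ‖(iota k m r θ x y).1‖ = r) ∧
    (∀ (θ φ : ℝ) (x u : EuclideanSpace ℝ (Fin (k + 1)))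
        (y v : EuclideanSpace ℝ (Fin (m + 1))),
      ‖x‖ = 1 → ‖y‖ = 1 → ‖u‖ = 1 → ‖v‖ = 1 →
        (iota k m r θ x y = iota k m r φ u v ↔
          (Real.cos φ = Real.cos θ ∧ Real.sin φ = Real.sin θ ∧ u = x ∧ v = y) ∨
          (Real.cos φ = -Real.cos θ ∧ Real.sin φ = -Real.sin θ ∧ u = -x ∧ v = -y))) :=
  iota_properties_general r hr k m
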